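/- arXiv:2112.10891 — 2 statements merged into one kernel-verified Lean document; each statement's English description precedes it below -/
import Mathlib

section
/- Let S ⊆ ℝᵐ contain the origin and let M : S ⇉ ℝⁿ be compact-valued, nonempty-valued near 0, locally bounded at 0, and both inner and outer semicontinuous at 0. Let J : ℝⁿ × ℝᵐ → ℝ be continuous at (ξ',0) for all ξ' ∈ M(0). Then the value function h(θ) := min_{ξ ∈ M(θ)} J(ξ,θ) is continuous at 0, and the argmin map θ ↦ argmin_{ξ∈M(θ)} J(ξ,θ) is outer semicontinuous at 0, i.e., limsup_{θ→0} argmin_{ξ∈M(θ)} J(ξ,θ) ⊆ argmin_{ξ∈M(0)} J(ξ,0). -/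
/-!
Along any sequence `θᵢ → θ₀` in `S`, local boundedness lets one extract convergent
subsequences of points `ξᵢ ∈ M θᵢ`, and outer semicontinuity puts their limits in `M θ₀`;
continuity of `J` then shows that the values on `M θᵢ` cannot drop below `h θ₀` in the limit.
Conversely, inner semicontinuity approximates a minimizer over `M θ₀` by points of `M θᵢ`,
whose values converge to `h θ₀`. Hence `h θᵢ → h θ₀`, and a limit `y` of minimizers lies in
`M θ₀` with `J y θ₀ = lim h θᵢ = h θ₀`.
-/

open Filter Topology

/-- Outer semicontinuity at a point, relative to `S` (sequential definition). -/
def OuterSemicontinuousAt {m n : ℕ} (M : (Fin m → ℝ) → Set (Fin n → ℝ))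
    (S : Set (Fin m → ℝ)) (x : Fin m → ℝ) : Prop :=
  ∀ (xs : ℕ → Fin m → ℝ) (ys : ℕ → Fin n → ℝ) (y : Fin n → ℝ),
    (∀ i, xs i ∈ S) → Tendsto xs atTop (𝓝 x) →
    (∀ i, ys i ∈ M (xs i)) → Tendsto ys atTop (𝓝 y) → y ∈ M x

/-- Local boundedness at a point, relative to `S`. -/
def LocallyBoundedAt {m n : ℕ} (M : (Fin m → ℝ) → Set (Fin n → ℝ))
    (S : Set (Fin m → ℝ)) (x : Fin m → ℝ) : Prop :=
  ∃ ε > 0, Bornology.IsBounded (⋃ x' ∈ S ∩ Metric.closedBall x ε, M x')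

/-- Inner limit of `M` as `θ → θ₀` within `S`. -/
def InnerLimit {m n : ℕ} (M : (Fin m → ℝ) → Set (Fin n → ℝ))
    (S : Set (Fin m → ℝ)) (θ₀ : Fin m → ℝ) : Set (Fin n → ℝ) :=
  {y | ∀ θs : ℕ → Fin m → ℝ, (∀ i, θs i ∈ S) → Tendsto θs atTop (𝓝 θ₀) →
    ∃ ys : ℕ → Fin n → ℝ, (∀ᶠ i in atTop, ys i ∈ M (θs i)) ∧ Tendsto ys atTop (𝓝 y)}

/-- The set of minimizers of `ξ ↦ J ξ θ` over `M θ`. -/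
def ArgminSet {m n : ℕ} (M : (Fin m → ℝ) → Set (Fin n → ℝ))
    (J : (Fin n → ℝ) → (Fin m → ℝ) → ℝ) (θ : Fin m → ℝ) : Set (Fin n → ℝ) :=
  {ξ | ξ ∈ M θ ∧ ∀ ξ' ∈ M θ, J ξ θ ≤ J ξ' θ}

theorem tendsto_nhdsWithin_of_forall_seq_tendsto {X Y : Type*} [TopologicalSpace X]
    [FirstCountableTopology X] [TopologicalSpace Y] {f : X → Y} {s : Set X} {x : X} {y : Y}
    (hx : x ∈ s)
    (hf : ∀ xs : ℕ → X, (∀ i, xs i ∈ s) → Tendsto xs atTop (𝓝 x) →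
      Tendsto (fun i => f (xs i)) atTop (𝓝 y)) :
    Tendsto f (𝓝[s] x) (𝓝 y) := by
  classical
  refine tendsto_iff_seq_tendsto.2 fun xs hxs => ?_
  rw [tendsto_nhdsWithin_iff] at hxs
  set xs' : ℕ → X := fun i => if xs i ∈ s then xs i else x
  have hxs'_mem : ∀ i, xs' i ∈ s := fun i => by
    by_cases hi : xs i ∈ s <;> simp [xs', hi, hx]
  have heq : xs' =ᶠ[atTop] xs := hxs.2.mono fun i hi => if_pos hi
  exact (hf xs' hxs'_mem (hxs.1.congr' heq.symm)).congr' (heq.fun_comp f)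

/-- Junk (`0`) where `(J · θ) '' M θ` is empty or unbounded below. -/
noncomputable def optimalValue {m n : ℕ} (M : (Fin m → ℝ) → Set (Fin n → ℝ))
    (J : (Fin n → ℝ) → (Fin m → ℝ) → ℝ) (θ : Fin m → ℝ) : ℝ :=
  sInf ((fun ξ => J ξ θ) '' M θ)

section

variable {m n : ℕ} {S : Set (Fin m → ℝ)} {M : (Fin m → ℝ) → Set (Fin n → ℝ)}
  {J : (Fin n → ℝ) → (Fin m → ℝ) → ℝ} {θ₀ : Fin m → ℝ}

theorem optimalValue_eq_of_mem_argminSet {θ : Fin m → ℝ} {ξ : Fin n → ℝ}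
    (hξ : ξ ∈ ArgminSet M J θ) : optimalValue M J θ = J ξ θ :=
  IsLeast.csInf_eq ⟨Set.mem_image_of_mem _ hξ.1, Set.forall_mem_image.2 hξ.2⟩

theorem argminSet_nonempty (hcpt : IsCompact (M θ₀)) (hne : (M θ₀).Nonempty)
    (hJ : ∀ ξ ∈ M θ₀, ContinuousAt (fun p : (Fin n → ℝ) × (Fin m → ℝ) => J p.1 p.2) (ξ, θ₀)) :
    (ArgminSet M J θ₀).Nonempty := by
  have hcont : ContinuousOn (fun ξ => J ξ θ₀) (M θ₀) := fun ξ hξ =>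
    ((hJ ξ hξ).comp (f := fun x => (x, θ₀)) (by fun_prop)).continuousWithinAt
  obtain ⟨ξ₀, hξ₀, hmin⟩ := hcpt.exists_isMinOn hne hcont
  exact ⟨ξ₀, hξ₀, fun ξ hξ => hmin hξ⟩

theorem exists_subseq_tendsto_of_locallyBoundedAt (hlb : LocallyBoundedAt M S θ₀)
    (hosc : OuterSemicontinuousAt M S θ₀) {θs : ℕ → Fin m → ℝ} {ξs : ℕ → Fin n → ℝ}
    (hθS : ∀ i, θs i ∈ S) (hθ : Tendsto θs atTop (𝓝 θ₀)) (hξ : ∀ i, ξs i ∈ M (θs i)) :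
    ∃ a ∈ M θ₀, ∃ φ : ℕ → ℕ, StrictMono φ ∧ Tendsto (ξs ∘ φ) atTop (𝓝 a) := by
  obtain ⟨ε, hε, hbdd⟩ := hlb
  have hnear : ∀ᶠ i in atTop, ξs i ∈ ⋃ θ ∈ S ∩ Metric.closedBall θ₀ ε, M θ :=
    (hθ.eventually (Metric.closedBall_mem_nhds θ₀ hε)).mono fun i hi =>
      Set.mem_biUnion ⟨hθS i, hi⟩ (hξ i)
  obtain ⟨a, -, φ, hφ, ha⟩ := tendsto_subseq_of_frequently_bounded hbdd hnear.frequently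
  exact ⟨a, hosc _ _ a (fun k => hθS (φ k)) (hθ.comp hφ.tendsto_atTop) (fun k => hξ (φ k)) ha,
    φ, hφ, ha⟩

theorem eventually_forall_lt_of_forall_lt (hlb : LocallyBoundedAt M S θ₀)
    (hosc : OuterSemicontinuousAt M S θ₀)
    (hJ : ∀ ξ ∈ M θ₀, ContinuousAt (fun p : (Fin n → ℝ) × (Fin m → ℝ) => J p.1 p.2) (ξ, θ₀))
    {θs : ℕ → Fin m → ℝ} (hθS : ∀ i, θs i ∈ S) (hθ : Tendsto θs atTop (𝓝 θ₀)) {c : ℝ}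
    (hc : ∀ ξ ∈ M θ₀, c < J ξ θ₀) :
    ∀ᶠ i in atTop, ∀ ξ ∈ M (θs i), c < J ξ (θs i) := by
  by_contra hcon
  simp only [not_eventually, not_forall, not_lt] at hcon
  obtain ⟨φ, hφ, hbad⟩ := extraction_of_frequently_atTop hcon
  choose ξs hξs hle using hbad
  have hθφ : Tendsto (θs ∘ φ) atTop (𝓝 θ₀) := hθ.comp hφ.tendsto_atTop
  obtain ⟨a, ha, ψ, hψ, hlim⟩ :=
    exists_subseq_tendsto_of_locallyBoundedAt hlb hosc (fun k => hθS (φ k)) hθφ hξs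
  have hJlim : Tendsto (fun k => J (ξs (ψ k)) (θs (φ (ψ k)))) atTop (𝓝 (J a θ₀)) :=
    (hJ a ha).tendsto.comp (hlim.prodMk_nhds (hθφ.comp hψ.tendsto_atTop))
  exact (hc a ha).not_ge (le_of_tendsto hJlim (Eventually.of_forall fun k => hle (ψ k)))

theorem tendsto_optimalValue (hlb : LocallyBoundedAt M S θ₀)
    (hisc : M θ₀ ⊆ InnerLimit M S θ₀) (hosc : OuterSemicontinuousAt M S θ₀)
    (hJ : ∀ ξ ∈ M θ₀, ContinuousAt (fun p : (Fin n → ℝ) × (Fin m → ℝ) => J p.1 p.2) (ξ, θ₀))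
    {ξ₀ : Fin n → ℝ} (hξ₀ : ξ₀ ∈ ArgminSet M J θ₀) {θs : ℕ → Fin m → ℝ}
    (hθS : ∀ i, θs i ∈ S) (hθ : Tendsto θs atTop (𝓝 θ₀)) :
    Tendsto (fun i => optimalValue M J (θs i)) atTop (𝓝 (optimalValue M J θ₀)) := by
  obtain ⟨ys, hys, hys_lim⟩ := hisc hξ₀.1 θs hθS hθ
  have hJys : Tendsto (fun i => J (ys i) (θs i)) atTop (𝓝 (optimalValue M J θ₀)) := by
    rw [optimalValue_eq_of_mem_argminSet hξ₀]
    exact (hJ ξ₀ hξ₀.1).tendsto.comp (hys_lim.prodMk_nhds hθ)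
  have hbelow : ∀ c < optimalValue M J θ₀, ∀ᶠ i in atTop, ∀ ξ ∈ M (θs i), c < J ξ (θs i) :=
    fun c hc => eventually_forall_lt_of_forall_lt hlb hosc hJ hθS hθ fun ξ hξ =>
      hc.trans_le ((optimalValue_eq_of_mem_argminSet hξ₀).trans_le (hξ₀.2 ξ hξ))
  refine tendsto_order.2 ⟨fun c hc => ?_, fun c hc => ?_⟩
  · obtain ⟨c', hcc', hc'⟩ := exists_between hc
    filter_upwards [hbelow c' hc', hys] with i hlow hyi
    exact hcc'.trans_le <| le_csInf ⟨_, Set.mem_image_of_mem _ hyi⟩ <|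
      Set.forall_mem_image.2 fun ξ hξ => (hlow ξ hξ).le
  · filter_upwards [hbelow _ (sub_one_lt _), hys, hJys.eventually_lt_const hc]
      with i hlow hyi hlt
    refine (csInf_le ⟨optimalValue M J θ₀ - 1, ?_⟩ (Set.mem_image_of_mem _ hyi)).trans_lt hlt
    exact Set.forall_mem_image.2 fun ξ hξ => (hlow ξ hξ).le

theorem outerSemicontinuousAt_argminSet (hlb : LocallyBoundedAt M S θ₀)
    (hisc : M θ₀ ⊆ InnerLimit M S θ₀) (hosc : OuterSemicontinuousAt M S θ₀)
    (hJ : ∀ ξ ∈ M θ₀, ContinuousAt (fun p : (Fin n → ℝ) × (Fin m → ℝ) => J p.1 p.2) (ξ, θ₀))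
    {ξ₀ : Fin n → ℝ} (hξ₀ : ξ₀ ∈ ArgminSet M J θ₀) :
    OuterSemicontinuousAt (ArgminSet M J) S θ₀ := by
  intro θs ys y hθS hθ hys hy
  have hyM : y ∈ M θ₀ := hosc θs ys y hθS hθ (fun i => (hys i).1) hy
  have hval : Tendsto (fun i => J (ys i) (θs i)) atTop (𝓝 (optimalValue M J θ₀)) :=
    (tendsto_optimalValue hlb hisc hosc hJ hξ₀ hθS hθ).congr fun i =>
      optimalValue_eq_of_mem_argminSet (hys i)
  have hJy : J y θ₀ = optimalValue M J θ₀ :=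
    tendsto_nhds_unique ((hJ y hyM).tendsto.comp (hy.prodMk_nhds hθ)) hval
  exact ⟨hyM, fun ξ hξ => hJy ▸ (optimalValue_eq_of_mem_argminSet hξ₀).trans_le (hξ₀.2 ξ hξ)⟩

end


/-- Berge: for `M` compact-valued, nonempty-valued near `0`, locally bounded and
both inner and outer semicontinuous at `0`, and `J` continuous at `(ξ',0)` for all `ξ' ∈ M 0`,
the value function `h(θ) = min_{ξ∈M(θ)} J(ξ,θ)` is continuous at `0` and the argmin map is
outer semicontinuous at `0`. -/
theorem stmt4 {m n : ℕ} (S : Set (Fin m → ℝ)) (h0S : (0 : Fin m → ℝ) ∈ S)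
    (M : (Fin m → ℝ) → Set (Fin n → ℝ))
    (hcpt : ∀ θ ∈ S, IsCompact (M θ))
    (hne : ∃ ε > 0, ∀ θ ∈ S ∩ Metric.closedBall 0 ε, (M θ).Nonempty)
    (hlb : LocallyBoundedAt M S 0)
    (hisc : M 0 ⊆ InnerLimit M S 0)
    (hosc : OuterSemicontinuousAt M S 0)
    (J : (Fin n → ℝ) → (Fin m → ℝ) → ℝ)
    (hJ : ∀ ξ' ∈ M 0,
      ContinuousAt (fun p : (Fin n → ℝ) × (Fin m → ℝ) => J p.1 p.2) (ξ', 0))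
    (h : (Fin m → ℝ) → ℝ)
    (hdef : ∀ θ ∈ S, h θ = sInf ((fun ξ => J ξ θ) '' M θ)) :
    Tendsto h (𝓝[S] (0 : Fin m → ℝ)) (𝓝 (h 0)) ∧
    (∀ (θs : ℕ → Fin m → ℝ) (ys : ℕ → Fin n → ℝ) (y : Fin n → ℝ),
      (∀ i, θs i ∈ S) → Tendsto θs atTop (𝓝 (0 : Fin m → ℝ)) →
      (∀ i, ys i ∈ ArgminSet M J (θs i)) → Tendsto ys atTop (𝓝 y) →
      y ∈ ArgminSet M J 0) := by
  obtain ⟨ε, hε, hne⟩ := hne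
  obtain ⟨ξ₀, hξ₀⟩ := argminSet_nonempty (hcpt 0 h0S)
    (hne 0 ⟨h0S, Metric.mem_closedBall_self hε.le⟩) hJ
  refine ⟨tendsto_nhdsWithin_of_forall_seq_tendsto h0S fun θs hθS hθ => ?_,
    outerSemicontinuousAt_argminSet hlb hisc hosc hJ hξ₀⟩
  rw [hdef 0 h0S]
  exact (tendsto_optimalValue hlb hisc hosc hJ hξ₀ hθS hθ).congr fun i => (hdef _ (hθS i)).symm
end

section
/- Let {xᵢ} be a sequence of optimal points, i.e., xᵢ ∈ argmin_{ξ ∈ M(θᵢ)} J(ξ) where θᵢ → 0, M : S ⇉ ℝⁿ is compact-valued, locally bounded, inner and outer semicontinuous at 0 with M(0) nonempty, and J : ℝⁿ → ℝ is continuous. If xᵢ → x, then x ∈ argmin_{ξ ∈ M(0)} J(ξ). -/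
open Filter Topology

theorem le_of_mem_innerLimit_of_tendsto_minimizers {m n : ℕ}
    {M : (Fin m → ℝ) → Set (Fin n → ℝ)} {S : Set (Fin m → ℝ)} {θ₀ : Fin m → ℝ}
    {J : (Fin n → ℝ) → ℝ} (hJ : Continuous J) {θs : ℕ → Fin m → ℝ} (hθS : ∀ i, θs i ∈ S)
    (hθ : Tendsto θs atTop (𝓝 θ₀)) {xs : ℕ → Fin n → ℝ}
    (hmin : ∀ i, ∀ ξ ∈ M (θs i), J (xs i) ≤ J ξ) {x : Fin n → ℝ}
    (hx : Tendsto xs atTop (𝓝 x)) {ξ : Fin n → ℝ} (hξ : ξ ∈ InnerLimit M S θ₀) :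
    J x ≤ J ξ := by
  obtain ⟨ys, hysM, hys⟩ := hξ θs hθS hθ
  refine le_of_tendsto_of_tendsto ((hJ.tendsto x).comp hx) ((hJ.tendsto ξ).comp hys) ?_
  filter_upwards [hysM] with i hi
  exact hmin i _ hi

theorem stmt18_general {m n : ℕ} (S : Set (Fin m → ℝ))
    (M : (Fin m → ℝ) → Set (Fin n → ℝ))
    (hisc : M 0 ⊆ InnerLimit M S 0)
    (hosc : OuterSemicontinuousAt M S 0)
    (J : (Fin n → ℝ) → ℝ) (hJ : Continuous J)
    (θs : ℕ → Fin m → ℝ) (hθS : ∀ i, θs i ∈ S)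
    (hθ0 : Tendsto θs atTop (𝓝 (0 : Fin m → ℝ)))
    (xs : ℕ → Fin n → ℝ)
    (hxs : ∀ i, xs i ∈ M (θs i) ∧ ∀ ξ ∈ M (θs i), J (xs i) ≤ J ξ)
    (x : Fin n → ℝ) (hx : Tendsto xs atTop (𝓝 x)) :
    x ∈ M 0 ∧ ∀ ξ ∈ M 0, J x ≤ J ξ :=
  ⟨hosc θs xs x hθS hθ0 (fun i => (hxs i).1) hx, fun _ hξ =>
    le_of_mem_innerLimit_of_tendsto_minimizers hJ hθS hθ0 (fun i => (hxs i).2) hx (hisc hξ)⟩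

/-- limits of minimizers over `M(θᵢ)`, `θᵢ → 0`, are minimizers over `M(0)`,
when `M` is compact-valued, locally bounded, inner and outer semicontinuous at `0` with
`M(0)` nonempty and `J` continuous. -/
theorem stmt18 {m n : ℕ} (S : Set (Fin m → ℝ)) (h0S : (0 : Fin m → ℝ) ∈ S)
    (M : (Fin m → ℝ) → Set (Fin n → ℝ))
    (hcpt : ∀ θ ∈ S, IsCompact (M θ)) (hne : (M 0).Nonempty)
    (hlb : LocallyBoundedAt M S 0)
    (hisc : M 0 ⊆ InnerLimit M S 0)
    (hosc : OuterSemicontinuousAt M S 0)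
    (J : (Fin n → ℝ) → ℝ) (hJ : Continuous J)
    (θs : ℕ → Fin m → ℝ) (hθS : ∀ i, θs i ∈ S)
    (hθ0 : Tendsto θs atTop (𝓝 (0 : Fin m → ℝ)))
    (xs : ℕ → Fin n → ℝ)
    (hxs : ∀ i, xs i ∈ M (θs i) ∧ ∀ ξ ∈ M (θs i), J (xs i) ≤ J ξ)
    (x : Fin n → ℝ) (hx : Tendsto xs atTop (𝓝 x)) :
    x ∈ M 0 ∧ ∀ ξ ∈ M 0, J x ≤ J ξ :=
  stmt18_general S M hisc hosc J hJ θs hθS hθ0 xs hxs x hx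
end
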